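/- Let (X^ε, Ω, P^ε) be a generalized clustering process on a finite connected graph with n ≥ 1 particles, and assume the family is irreducible. Then the family is OM-reversible, with ν(x) = |s(x)| − 1 satisfying the order-of-magnitude detailed balance condition; moreover, if π^ε are stationary distributions for P^ε whose entries have integer orders of magnitude φ(π(x)), then φ(π(x)) = |s(x)| − 1 for every x ∈ Ω. -/

import Mathlib

open Finset

/-- `f` is `Θ(ε^k)` as `ε → 0⁺`: there are positive constants `M₁, M₂, ε̄` with
`M₁ ε^k ≤ f ε ≤ M₂ ε^k` for all `0 < ε < ε̄`. -/
def IsTheta (f : ℝ → ℝ) (k : ℤ) : Prop :=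
  ∃ M₁ M₂ εbar : ℝ, 0 < M₁ ∧ 0 < M₂ ∧ 0 < εbar ∧
    ∀ ε : ℝ, 0 < ε → ε < εbar → M₁ * ε ^ k ≤ f ε ∧ f ε ≤ M₂ * ε ^ k

/-- `P(u,v) > 0` in the order-of-magnitude sense: `ε ↦ P^ε(u,v)` is `Θ(ε^k)`
for some integer `k`. -/
def EPos {Ω : Type*} (P : ℝ → Ω → Ω → ℝ) (u v : Ω) : Prop :=
  ∃ k : ℤ, IsTheta (fun ε => P ε u v) k

/-- Configurations of `n` particles on the vertex set `V`. -/
abbrev Config (V : Type) [Fintype V] (n : ℕ) := {x : V → ℕ // ∑ v, x v = n}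

noncomputable instance Config.fintype {V : Type} [Fintype V] [DecidableEq V] {n : ℕ} :
    Fintype (Config V n) :=
  Fintype.ofInjective
    (fun x : Config V n => fun v : V =>
      (⟨x.val v, Nat.lt_succ_of_le ((Finset.single_le_sum
        (f := x.val) (fun i _ => Nat.zero_le _) (Finset.mem_univ v)).trans
        (le_of_eq x.2))⟩ : Fin (n + 1)))
    (fun a b h => Subtype.ext (funext fun v => congrArg Fin.val (congrFun h v)))

/-- The configuration `x^{i,j}` obtained from `x` by moving one particle from vertex `i`
to vertex `j` (with `x^{i,i} = x`). -/
def move {V : Type} [DecidableEq V] (x : V → ℕ) (i j : V) : V → ℕ :=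
  if i = j then x else Function.update (Function.update x i (x i - 1)) j (x j + 1)

/-- The support of a configuration: the set of occupied vertices. -/
def supp {V : Type} [Fintype V] [DecidableEq V] (x : V → ℕ) : Finset V :=
  Finset.univ.filter fun v => x v ≠ 0

/-! Put `ν x = |s(x)| - 1`. A transition moves one particle, so it changes the support by at most
one vertex, and the three axioms of a clustering process say exactly that
`ν x + φ(P x y) = ν y + φ(P y x)` along every transition.

For a stationary family, let `S` be the set where `φπ - ν` is minimal. Stationarity makes the
probability flow out of `S` equal to the flow into `S`. The order of a flow is the least order
`φπ x + φ(P x y)` of its transitions, and detailed balance makes every transition leaving `S`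
strictly cheaper than its reverse, which enters `S`; so no transition leaves `S`, and by
irreducibility `S` is everything. Finally `∑ π = 1` gives `min φπ = 0 = min ν`. -/
open Filter Topology

lemma isTheta_iff_eventually {f : ℝ → ℝ} {k : ℤ} :
    IsTheta f k ↔ ∃ M₁ M₂ : ℝ, 0 < M₁ ∧ 0 < M₂ ∧
      ∀ᶠ ε in 𝓝[>] 0, M₁ * ε ^ k ≤ f ε ∧ f ε ≤ M₂ * ε ^ k := by
  simp only [IsTheta, (nhdsGT_basis (0 : ℝ)).eventually_iff, Set.mem_Ioo]
  constructor
  · rintro ⟨M₁, M₂, e, hM₁, hM₂, he, h⟩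
    exact ⟨M₁, M₂, hM₁, hM₂, e, he, fun ε hε => h ε hε.1 hε.2⟩
  · rintro ⟨M₁, M₂, hM₁, hM₂, e, he, h⟩
    exact ⟨M₁, M₂, e, hM₁, hM₂, he, fun ε hε hεe => h ⟨hε, hεe⟩⟩

lemma eventually_pos_lt_one : ∀ᶠ ε in 𝓝[>] (0 : ℝ), 0 < ε ∧ ε < 1 :=
  Ioo_mem_nhdsGT one_pos

namespace IsTheta

variable {f g : ℝ → ℝ} {k l : ℤ}

lemma congr' (hf : IsTheta f k) (hfg : f =ᶠ[𝓝[>] 0] g) : IsTheta g k := by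
  obtain ⟨M₁, M₂, hM₁, hM₂, h⟩ := isTheta_iff_eventually.1 hf
  exact isTheta_iff_eventually.2
    ⟨M₁, M₂, hM₁, hM₂, (h.and hfg).mono fun ε h => h.2 ▸ h.1⟩

lemma mul (hf : IsTheta f k) (hg : IsTheta g l) : IsTheta (fun ε => f ε * g ε) (k + l) := by
  obtain ⟨M₁, M₂, hM₁, hM₂, hf'⟩ := isTheta_iff_eventually.1 hf
  obtain ⟨N₁, N₂, hN₁, hN₂, hg'⟩ := isTheta_iff_eventually.1 hg
  refine isTheta_iff_eventually.2 ⟨M₁ * N₁, M₂ * N₂, by positivity, by positivity, ?_⟩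
  filter_upwards [hf', hg', self_mem_nhdsWithin]
    with ε ⟨hf₁, hf₂⟩ ⟨hg₁, hg₂⟩ (hε : 0 < ε)
  have hεk := zpow_pos hε k
  have hεl := zpow_pos hε l
  rw [zpow_add₀ hε.ne']
  constructor
  · calc M₁ * N₁ * (ε ^ k * ε ^ l) = (M₁ * ε ^ k) * (N₁ * ε ^ l) := by ring
      _ ≤ f ε * g ε := mul_le_mul hf₁ hg₁ (by positivity) (le_trans (by positivity) hf₁)
  · calc f ε * g ε ≤ (M₂ * ε ^ k) * (N₂ * ε ^ l) :=
          mul_le_mul hf₂ hg₂ (le_trans (by positivity) hg₁) (by positivity)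
      _ = M₂ * N₂ * (ε ^ k * ε ^ l) := by ring

lemma add (hf : IsTheta f k) (hg : IsTheta g l) : IsTheta (fun ε => f ε + g ε) (min k l) := by
  obtain ⟨M₁, M₂, hM₁, hM₂, hf'⟩ := isTheta_iff_eventually.1 hf
  obtain ⟨N₁, N₂, hN₁, hN₂, hg'⟩ := isTheta_iff_eventually.1 hg
  refine isTheta_iff_eventually.2 ⟨min M₁ N₁, M₂ + N₂, by positivity, by positivity, ?_⟩
  filter_upwards [hf', hg', eventually_pos_lt_one]
    with ε ⟨hf₁, hf₂⟩ ⟨hg₁, hg₂⟩ ⟨hε, hε1⟩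
  have hk := zpow_le_zpow_right_of_le_one₀ hε hε1.le (min_le_left k l)
  have hl := zpow_le_zpow_right_of_le_one₀ hε hε1.le (min_le_right k l)
  have hεk := zpow_pos hε k
  have hεl := zpow_pos hε l
  have hMN₁ := min_le_left M₁ N₁
  have hMN₂ := min_le_right M₁ N₁
  constructor
  · rcases min_cases k l with ⟨hm, -⟩ | ⟨hm, -⟩ <;> rw [hm] <;> nlinarith
  · nlinarith

lemma unique (hk : IsTheta f k) (hl : IsTheta f l) : k = l := by
  wlog hlt : k < l generalizing k l
  · rcases (not_lt.1 hlt).lt_or_eq with h | h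
    · exact (this hl hk h).symm
    · exact h.symm
  exfalso
  obtain ⟨M₁, _, hM₁, _, hk'⟩ := isTheta_iff_eventually.1 hk
  obtain ⟨_, N₂, _, hN₂, hl'⟩ := isTheta_iff_eventually.1 hl
  -- `M₁ ε ^ k ≤ N₂ ε ^ l` forces `M₁ ≤ N₂ ε ^ (l - k) ≤ N₂ ε`, which fails for small `ε`
  have hsmall : ∀ᶠ ε in 𝓝[>] (0 : ℝ), ε < M₁ / N₂ := by
    filter_upwards [Ioo_mem_nhdsGT (div_pos hM₁ hN₂)] with ε hε using hε.2
  obtain ⟨ε, ⟨hk₁, -⟩, ⟨-, hl₂⟩, ⟨hε, hε1⟩, hεM⟩ :=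
    (hk'.and (hl'.and (eventually_pos_lt_one.and hsmall))).exists
  have hpow : ε ^ l ≤ ε * ε ^ k := by
    calc ε ^ l = ε ^ (l - k) * ε ^ k := by rw [← zpow_add₀ hε.ne', sub_add_cancel]
      _ ≤ ε ^ (1 : ℤ) * ε ^ k :=
        mul_le_mul_of_nonneg_right (zpow_le_zpow_right_of_le_one₀ hε hε1.le (by omega))
          (zpow_pos hε k).le
      _ = ε * ε ^ k := by rw [zpow_one]
  have hεk := zpow_pos hε k
  rw [lt_div_iff₀ hN₂] at hεM
  nlinarith

lemma one : IsTheta (fun _ => 1) 0 :=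
  isTheta_iff_eventually.2 ⟨1, 1, one_pos, one_pos, Eventually.of_forall fun _ => by simp⟩

lemma sum {ι : Type*} {s : Finset ι} (hs : s.Nonempty) {f : ι → ℝ → ℝ} {k : ι → ℤ}
    (h : ∀ i ∈ s, IsTheta (f i) (k i)) :
    IsTheta (fun ε => ∑ i ∈ s, f i ε) (s.inf' hs k) := by
  induction hs using Finset.Nonempty.cons_induction with
  | singleton a => simpa using h a (Finset.mem_singleton_self a)
  | cons a s ha hs ih =>
    simp only [Finset.sum_cons, Finset.inf'_cons hs]
    exact (h a (Finset.mem_cons_self a s)).add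
      (ih fun i hi => h i (Finset.mem_cons_of_mem hi))

lemma sum_of_eventually_zero {ι : Type*} {s : Finset ι} {p : ι → Prop} [DecidablePred p]
    (hs : (s.filter p).Nonempty) {f : ι → ℝ → ℝ} {k : ι → ℤ}
    (hθ : ∀ i ∈ s, p i → IsTheta (f i) (k i))
    (h0 : ∀ i ∈ s, ¬ p i → ∀ᶠ ε in 𝓝[>] 0, f i ε = 0) :
    IsTheta (fun ε => ∑ i ∈ s, f i ε) ((s.filter p).inf' hs k) := by
  refine (sum hs fun i hi =>
    hθ i (Finset.mem_filter.1 hi).1 (Finset.mem_filter.1 hi).2).congr' ?_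
  filter_upwards [(s.filter (¬ p ·)).eventually_all.2 fun i hi =>
    h0 i (Finset.mem_filter.1 hi).1 (Finset.mem_filter.1 hi).2] with ε hε
  refine Finset.sum_filter_of_ne fun i hi hne => ?_
  by_contra hp
  exact hne (hε i (Finset.mem_filter.2 ⟨hi, hp⟩))

end IsTheta

section StationaryOrders

variable {Ω : Type*}

lemma sum_sum_compl_eq_sum_compl_sum [Fintype Ω] [DecidableEq Ω]
    {P : Ω → Ω → ℝ} {π : Ω → ℝ}
    (hrow : ∀ x, ∑ y, P x y = 1) (hstat : ∀ y, ∑ x, π x * P x y = π y) (S : Finset Ω) :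
    ∑ x ∈ S, ∑ y ∈ Sᶜ, π x * P x y = ∑ x ∈ Sᶜ, ∑ y ∈ S, π x * P x y := by
  -- both sides equal `∑ x ∈ S, π x` minus the flow inside `S`
  have hout : ∑ x ∈ S, π x =
      ∑ x ∈ S, ∑ y ∈ S, π x * P x y + ∑ x ∈ S, ∑ y ∈ Sᶜ, π x * P x y := by
    rw [← Finset.sum_add_distrib]
    refine Finset.sum_congr rfl fun x _ => ?_
    rw [← Finset.mul_sum, ← Finset.mul_sum, ← mul_add, add_comm, Finset.sum_compl_add_sum,
      hrow, mul_one]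
  have hin : ∑ y ∈ S, π y =
      ∑ x ∈ S, ∑ y ∈ S, π x * P x y + ∑ x ∈ Sᶜ, ∑ y ∈ S, π x * P x y := by
    rw [Finset.sum_comm (s := S), Finset.sum_comm (s := Sᶜ), ← Finset.sum_add_distrib]
    refine Finset.sum_congr rfl fun y _ => ?_
    rw [add_comm, Finset.sum_compl_add_sum, hstat]
  linarith

variable {P : ℝ → Ω → Ω → ℝ} {φP : Ω → Ω → ℤ} {π : ℝ → Ω → ℝ} {φπ : Ω → ℤ}

open Classical in
lemma isTheta_sum_flow
    (hP : ∀ x y, EPos P x y → IsTheta (fun ε => P ε x y) (φP x y))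
    (hP0 : ∀ x y, ¬ EPos P x y → ∀ᶠ ε in 𝓝[>] 0, P ε x y = 0)
    (hπ : ∀ x, IsTheta (fun ε => π ε x) (φπ x)) {T : Finset (Ω × Ω)}
    (hT : (T.filter fun p => EPos P p.1 p.2).Nonempty) :
    IsTheta (fun ε => ∑ p ∈ T, π ε p.1 * P ε p.1 p.2)
      ((T.filter fun p => EPos P p.1 p.2).inf' hT fun p => φπ p.1 + φP p.1 p.2) :=
  IsTheta.sum_of_eventually_zero hT (fun p _ hp => (hπ p.1).mul (hP p.1 p.2 hp))
    fun p _ hp => (hP0 p.1 p.2 hp).mono fun ε hε => by simp [hε]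

lemma not_epos_of_forall_le_of_lt [Fintype Ω] {ν : Ω → ℤ}
    (hbal : ∀ x y, EPos P x y → ν x + φP x y = ν y + φP y x)
    (hsym : ∀ x y, EPos P x y → EPos P y x)
    (hP : ∀ x y, EPos P x y → IsTheta (fun ε => P ε x y) (φP x y))
    (hP0 : ∀ x y, ¬ EPos P x y → ∀ᶠ ε in 𝓝[>] 0, P ε x y = 0)
    (hπ : ∀ x, IsTheta (fun ε => π ε x) (φπ x))
    (hrow : ∀ᶠ ε in 𝓝[>] 0, ∀ x, ∑ y, P ε x y = 1)
    (hstat : ∀ᶠ ε in 𝓝[>] 0, ∀ y, ∑ x, π ε x * P ε x y = π ε y)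
    {x y : Ω} (hmin : ∀ z, φπ x - ν x ≤ φπ z - ν z) (hlt : φπ x - ν x < φπ y - ν y) :
    ¬ EPos P x y := by
  classical
  intro hxy
  set S := Finset.univ.filter fun z => φπ z - ν z = φπ x - ν x
  have hxS : x ∈ S := by simp [S]
  have hyS : y ∈ Sᶜ := by simp [S, hlt.ne']
  have hout : ((S ×ˢ Sᶜ).filter fun p => EPos P p.1 p.2).Nonempty :=
    ⟨(x, y), by simp [hxS, hyS, hxy]⟩
  have hin : ((Sᶜ ×ˢ S).filter fun p => EPos P p.1 p.2).Nonempty :=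
    ⟨(y, x), by simp [hxS, hyS, hsym x y hxy]⟩
  -- the flows out of and into `S` coincide, so they have the same order
  have horder := (isTheta_sum_flow hP hP0 hπ hout).unique <|
    (isTheta_sum_flow hP hP0 hπ hin).congr' <| by
      filter_upwards [hrow, hstat] with ε hrow hstat
      simp only [Finset.sum_product]
      exact (sum_sum_compl_eq_sum_compl_sum hrow hstat S).symm
  obtain ⟨⟨b, a⟩, hba, hmin_in⟩ :=
    Finset.exists_mem_eq_inf' hin fun p => φπ p.1 + φP p.1 p.2
  simp only [Finset.mem_filter, Finset.mem_product, Finset.mem_compl] at hba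
  obtain ⟨⟨hbS, haS⟩, hba⟩ := hba
  have hab : (a, b) ∈ (S ×ˢ Sᶜ).filter fun p => EPos P p.1 p.2 := by
    simp [haS, hbS, hsym b a hba]
  have hle_out := Finset.inf'_le (fun p : Ω × Ω => φπ p.1 + φP p.1 p.2) hab
  have ha : φπ a - ν a = φπ x - ν x := (Finset.mem_filter.1 haS).2
  have hb : φπ b - ν b ≠ φπ x - ν x := fun h =>
    hbS (Finset.mem_filter.2 ⟨Finset.mem_univ b, h⟩)
  have hb' := hmin b
  have hbal' := hbal b a hba
  simp only at hle_out hmin_in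
  omega

lemma order_sub_potential_eq [Fintype Ω] {ν : Ω → ℤ}
    (hbal : ∀ x y, EPos P x y → ν x + φP x y = ν y + φP y x)
    (hsym : ∀ x y, EPos P x y → EPos P y x)
    (hirr : ∀ u v, ∃ (r : ℕ) (c : ℕ → Ω),
      c 0 = u ∧ c r = v ∧ ∀ i < r, EPos P (c i) (c (i + 1)))
    (hP : ∀ x y, EPos P x y → IsTheta (fun ε => P ε x y) (φP x y))
    (hP0 : ∀ x y, ¬ EPos P x y → ∀ᶠ ε in 𝓝[>] 0, P ε x y = 0)
    (hπ : ∀ x, IsTheta (fun ε => π ε x) (φπ x))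
    (hrow : ∀ᶠ ε in 𝓝[>] 0, ∀ x, ∑ y, P ε x y = 1)
    (hstat : ∀ᶠ ε in 𝓝[>] 0, ∀ y, ∑ x, π ε x * P ε x y = π ε y) (x y : Ω) :
    φπ x - ν x = φπ y - ν y := by
  have : Nonempty Ω := ⟨x⟩
  obtain ⟨z₀, hz₀⟩ := Finite.exists_min fun z => φπ z - ν z
  suffices h : ∀ z, φπ z - ν z = φπ z₀ - ν z₀ by rw [h x, h y]
  intro z
  obtain ⟨r, c, hc0, rfl, hc⟩ := hirr z₀ z
  induction r with
  | zero => rw [hc0]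
  | succ r ih =>
    have hcr := ih (fun i hi => hc i (Nat.lt_succ_of_lt hi))
    by_contra hne
    refine not_epos_of_forall_le_of_lt hbal hsym hP hP0 hπ hrow hstat
      (fun z => hcr ▸ hz₀ z) ?_ (hc r (Nat.lt_succ_self r))
    exact hcr ▸ lt_of_le_of_ne (hz₀ _) (Ne.symm hne)

lemma exists_order_eq_zero_of_sum_eq_one [Fintype Ω] [Nonempty Ω]
    (hπ : ∀ x, IsTheta (fun ε => π ε x) (φπ x))
    (hsum : ∀ᶠ ε in 𝓝[>] 0, ∑ x, π ε x = 1) : ∃ z, φπ z = 0 ∧ ∀ x, 0 ≤ φπ x := by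
  have horder :=
    ((IsTheta.sum Finset.univ_nonempty fun x _ => hπ x).congr' hsum).unique IsTheta.one
  obtain ⟨z, -, hz⟩ := Finset.exists_mem_eq_inf' Finset.univ_nonempty φπ
  exact ⟨z, hz ▸ horder, fun x => horder ▸ Finset.inf'_le φπ (Finset.mem_univ x)⟩

end StationaryOrders

section Clustering

variable {V : Type} [Fintype V] [DecidableEq V]

lemma mem_supp {x : V → ℕ} {v : V} : v ∈ supp x ↔ x v ≠ 0 := by
  simp [supp]

lemma supp_move_subset (x : V → ℕ) (i j : V) : supp (move x i j) ⊆ insert j (supp x) := by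
  intro v
  simp only [Finset.mem_insert, mem_supp, move]
  grind

lemma supp_subset_insert_supp_move (x : V → ℕ) (i j : V) :
    supp x ⊆ insert i (supp (move x i j)) := by
  intro v
  simp only [Finset.mem_insert, mem_supp, move]
  grind

lemma card_supp_move_le (x : V → ℕ) (i j : V) : #(supp (move x i j)) ≤ #(supp x) + 1 :=
  (Finset.card_le_card (supp_move_subset x i j)).trans (Finset.card_insert_le _ _)

lemma card_supp_le_card_supp_move (x : V → ℕ) (i j : V) : #(supp x) ≤ #(supp (move x i j)) + 1 :=
  (Finset.card_le_card (supp_subset_insert_supp_move x i j)).trans (Finset.card_insert_le _ _)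

lemma one_le_card_supp {n : ℕ} (hn : 1 ≤ n) (x : Config V n) : 1 ≤ #(supp x.val) := by
  obtain ⟨v, -, hv⟩ := Finset.exists_ne_zero_of_sum_ne_zero (x.2.trans_ne (by omega))
  exact Finset.card_pos.2 ⟨v, mem_supp.2 hv⟩

lemma card_supp_single {n : ℕ} (hn : 1 ≤ n) (v : V) : #(supp (Pi.single v n)) = 1 :=
  Finset.card_eq_one.2 ⟨v, by ext w; rcases eq_or_ne w v with rfl | h <;> simp [mem_supp, *]; omega⟩

lemma card_supp_sub_one_add_eq {n : ℕ} {R : Config V n → Config V n → Prop}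
    {φ : Config V n → Config V n → ℤ}
    (hmoves : ∀ x y, R x y → y = x ∨ ∃ i j : V, y.val = move x.val i j)
    (hsym : ∀ x y, R x y → R y x)
    (heq : ∀ x y, R x y → #(supp x.val) = #(supp y.val) → φ x y = φ y x)
    (hstep : ∀ x y, R x y → #(supp x.val) + 1 = #(supp y.val) → φ x y = 1 ∧ φ y x = 0)
    {x y : Config V n} (hxy : R x y) :
    ((#(supp x.val) : ℤ) - 1) + φ x y = ((#(supp y.val) : ℤ) - 1) + φ y x := by
  have hclose : #(supp y.val) ≤ #(supp x.val) + 1 ∧ #(supp x.val) ≤ #(supp y.val) + 1 := by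
    rcases hmoves x y hxy with rfl | ⟨i, j, hy⟩
    · omega
    · rw [hy]
      exact ⟨card_supp_move_le _ i j, card_supp_le_card_supp_move _ i j⟩
  rcases (by omega : #(supp x.val) = #(supp y.val) ∨ #(supp x.val) + 1 = #(supp y.val) ∨
      #(supp y.val) + 1 = #(supp x.val)) with h | h | h
  · have := heq x y hxy h; omega
  · have := hstep x y hxy h; omega
  · have := hstep y x (hsym x y hxy) h; omega

end Clustering

theorem generalized_clustering_process_OM_reversible_general
    {V : Type} [Fintype V] [DecidableEq V]
    (G : SimpleGraph V)
    (n : ℕ) (hn : 1 ≤ n)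
    (P : ℝ → Config V n → Config V n → ℝ)
    (hstoch : ∀ ε : ℝ, 0 < ε →
      (∀ x y : Config V n, 0 ≤ P ε x y) ∧ ∀ x : Config V n, ∑ y, P ε x y = 1)
    (hmoves : ∀ x y : Config V n, EPos P x y →
      y = x ∨ ∃ i j : V, G.Adj i j ∧ 1 ≤ x.val i ∧ y.val = move x.val i j)
    (hzero : ∀ x y : Config V n, ¬ EPos P x y →
      ∃ εbar > (0 : ℝ), ∀ ε : ℝ, 0 < ε → ε < εbar → P ε x y = 0)
    (hsym : ∀ x y : Config V n, EPos P x y ↔ EPos P y x)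
    (φP : Config V n → Config V n → ℤ)
    (hφP : ∀ x y : Config V n, EPos P x y → IsTheta (fun ε => P ε x y) (φP x y))
    (heq : ∀ x y : Config V n, EPos P x y →
      (supp x.val).card = (supp y.val).card → φP x y = φP y x)
    (hstep : ∀ x y : Config V n, EPos P x y →
      (supp x.val).card + 1 = (supp y.val).card → φP x y = 1 ∧ φP y x = 0)
    (hirr : ∀ u v : Config V n, ∃ (r : ℕ) (c : ℕ → Config V n),
      c 0 = u ∧ c r = v ∧ ∀ i < r, EPos P (c i) (c (i + 1))) :
    (∀ x y : Config V n, EPos P x y →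
      (((supp x.val).card : ℤ) - 1) + φP x y = (((supp y.val).card : ℤ) - 1) + φP y x) ∧
    (∀ (π : ℝ → Config V n → ℝ) (φπ : Config V n → ℤ),
      (∀ ε : ℝ, 0 < ε → (∀ z : Config V n, 0 ≤ π ε z) ∧ (∑ z, π ε z) = 1 ∧
        ∀ y : Config V n, (∑ x, π ε x * P ε x y) = π ε y) →
      (∀ z : Config V n, IsTheta (fun ε => π ε z) (φπ z)) →
      ∀ z : Config V n, φπ z = ((supp z.val).card : ℤ) - 1) := by
  have hbal (x y) (hxy : EPos P x y) :=
    card_supp_sub_one_add_eq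
      (fun x y h => (hmoves x y h).imp_right fun ⟨i, j, _, _, hy⟩ => ⟨i, j, hy⟩)
      (fun x y => (hsym x y).1) heq hstep hxy
  refine ⟨hbal, fun π φπ hπ hφπ z => ?_⟩
  have hP0 (x y) (h : ¬ EPos P x y) : ∀ᶠ ε in 𝓝[>] 0, P ε x y = 0 := by
    obtain ⟨εbar, hεbar, h0⟩ := hzero x y h
    filter_upwards [Ioo_mem_nhdsGT hεbar] with ε hε using h0 ε hε.1 hε.2
  have hpos : ∀ᶠ ε in 𝓝[>] (0 : ℝ), 0 < ε := self_mem_nhdsWithin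
  have hconst := order_sub_potential_eq hbal (fun x y => (hsym x y).1) hirr hφP hP0 hφπ
    (hpos.mono fun ε hε => (hstoch ε hε).2) (hpos.mono fun ε hε => (hπ ε hε).2.2)
  have : Nonempty (Config V n) := ⟨z⟩
  obtain ⟨z₀, hz₀, hφπ_nonneg⟩ :=
    exists_order_eq_zero_of_sum_eq_one hφπ (hpos.mono fun ε hε => (hπ ε hε).2.1)
  obtain ⟨v, -⟩ := Finset.card_pos.1 (one_le_card_supp hn z)
  let x₁ : Config V n := ⟨Pi.single v n, by simp⟩
  -- `φπ - ν` is constant; `φπ z₀ = 0` makes the constant `≤ 0` and `φπ x₁ ≥ 0` makes it `≥ 0`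
  have := hconst z x₁
  have := hconst z z₀
  have : #(supp x₁.val) = 1 := card_supp_single hn v
  have := one_le_card_supp hn z₀
  have := hφπ_nonneg x₁
  omega

/-- A generalized clustering process (irreducible) is OM-reversible with
`ν(x) = |s(x)| − 1` satisfying order-of-magnitude detailed balance; moreover any
stationary distributions `π^ε` with integer orders of magnitude satisfy
`φ(π(x)) = |s(x)| − 1`. -/
theorem generalized_clustering_process_OM_reversible
    {V : Type} [Fintype V] [DecidableEq V]
    (G : SimpleGraph V) (hconn : G.Connected)
    (n : ℕ) (hn : 1 ≤ n)
    (P : ℝ → Config V n → Config V n → ℝ)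
    (hstoch : ∀ ε : ℝ, 0 < ε →
      (∀ x y : Config V n, 0 ≤ P ε x y) ∧ ∀ x : Config V n, ∑ y, P ε x y = 1)
    (hmoves : ∀ x y : Config V n, EPos P x y →
      y = x ∨ ∃ i j : V, G.Adj i j ∧ 1 ≤ x.val i ∧ y.val = move x.val i j)
    (hzero : ∀ x y : Config V n, ¬ EPos P x y →
      ∃ εbar > (0 : ℝ), ∀ ε : ℝ, 0 < ε → ε < εbar → P ε x y = 0)
    (hsym : ∀ x y : Config V n, EPos P x y ↔ EPos P y x)
    (φP : Config V n → Config V n → ℤ)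
    (hφP : ∀ x y : Config V n, EPos P x y → IsTheta (fun ε => P ε x y) (φP x y))
    (h01 : ∀ x y : Config V n, EPos P x y → φP x y = 0 ∨ φP x y = 1)
    (heq : ∀ x y : Config V n, EPos P x y →
      (supp x.val).card = (supp y.val).card → φP x y = φP y x)
    (hstep : ∀ x y : Config V n, EPos P x y →
      (supp x.val).card + 1 = (supp y.val).card → φP x y = 1 ∧ φP y x = 0)
    (hirr : ∀ u v : Config V n, ∃ (r : ℕ) (c : ℕ → Config V n),
      c 0 = u ∧ c r = v ∧ ∀ i < r, EPos P (c i) (c (i + 1))) :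
    (∀ x y : Config V n, EPos P x y →
      (((supp x.val).card : ℤ) - 1) + φP x y = (((supp y.val).card : ℤ) - 1) + φP y x) ∧
    (∀ (π : ℝ → Config V n → ℝ) (φπ : Config V n → ℤ),
      (∀ ε : ℝ, 0 < ε → (∀ z : Config V n, 0 ≤ π ε z) ∧ (∑ z, π ε z) = 1 ∧
        ∀ y : Config V n, (∑ x, π ε x * P ε x y) = π ε y) →
      (∀ z : Config V n, IsTheta (fun ε => π ε z) (φπ z)) →
      ∀ z : Config V n, φπ z = ((supp z.val).card : ℤ) - 1) :=
  generalized_clustering_process_OM_reversible_general G n hn P hstoch hmoves hzero hsym φP hφP heq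
    hstep hirr
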